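/- Let $n$ be a positive integer and $q = 2^n$. Define $\Phi(x) = x + x^{-1}$. Then $\Phi(\mu_{q^2+1} \setminus \{1\}) = \{a \in \mathbb{F}_{q^2}^* : \mathrm{Tr}_2^{q^2}(1/a) = 1\}$ and $\Phi(\mathbb{F}_{q^2}^* \setminus \{1\}) = \{a \in \mathbb{F}_{q^2}^* : \mathrm{Tr}_2^{q^2}(1/a) = 0\}$. -/

import Mathlib

/-!
In characteristic 2 the substitution `x = z⁻¹ + 1` turns `x + x⁻¹` into `(z² + z)⁻¹`, and
the trace of `z² + z` from `𝔽_{q²}` telescopes to `z^{q²} + z`. Hence `x^{q²} = x` exactly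
when that trace is `0`, and `x^{q²} = x⁻¹` exactly when it is `1`. Conversely, an element
of `𝔽_{q²}` has absolute trace `0` in `𝔽_{q⁴}`, so it is of the form `z² + z` there: the
image of the additive map `z ↦ z² + z`, whose kernel is `{0, 1}`, has the same size as the
kernel of the surjective trace.
-/
open Finset

section CharTwo
variable {R : Type*} [CommRing R] [CharP R 2]

theorem sum_range_sq_add_self_pow_two_pow (z : R) (m : ℕ) :
    ∑ i ∈ range m, (z ^ 2 + z) ^ 2 ^ i = z ^ 2 ^ m + z := by
  induction m with
  | zero => simp [CharTwo.add_self_eq_zero]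
  | succ m ih =>
    rw [sum_range_succ, ih, add_pow_char_pow, ← pow_mul, ← pow_succ']
    linear_combination CharTwo.add_self_eq_zero (z ^ 2 ^ m)

theorem sum_range_two_mul_pow_two_pow_eq_zero {c : R} {k : ℕ} (hc : c ^ 2 ^ k = c) :
    ∑ i ∈ range (2 * k), c ^ 2 ^ i = 0 := by
  simp_rw [two_mul, sum_range_add, pow_add, pow_mul, hc, CharTwo.add_self_eq_zero]

theorem sq_add_self_eq_zero_iff [NoZeroDivisors R] {z : R} : z ^ 2 + z = 0 ↔ z = 0 ∨ z = 1 := by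
  rw [sq, ← mul_add_one, mul_eq_zero, CharTwo.add_eq_zero]

variable (R) in
def artinSchreier : R →+ R where
  toFun z := z ^ 2 + z
  map_zero' := by simp
  map_add' x y := by rw [CharTwo.add_sq]; ring

end CharTwo

theorem pow_succ_eq_one_iff {G₀ : Type*} [GroupWithZero G₀] {x : G₀} {m : ℕ} :
    x ^ (m + 1) = 1 ↔ x ^ m = x⁻¹ ∧ x ≠ 0 := by
  refine ⟨fun h => ?_, fun ⟨h, hx0⟩ => by rw [pow_succ, h, inv_mul_cancel₀ hx0]⟩
  have hx0 : x ≠ 0 := by rintro rfl; simp at h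
  exact ⟨(mul_eq_one_iff_eq_inv₀ hx0).1 (by rwa [← pow_succ]), hx0⟩

theorem mem_ker_trace_zmod_two_iff {K : Type*} [Field K] [Finite K] [Algebra (ZMod 2) K] {c : K} :
    c ∈ (Algebra.trace (ZMod 2) K).toAddMonoidHom.ker ↔
      ∑ i ∈ range (Module.finrank (ZMod 2) K), c ^ 2 ^ i = 0 := by
  have htr := FiniteField.algebraMap_trace_eq_sum_pow (ZMod 2) K c
  rw [Nat.card_zmod] at htr
  rw [AddMonoidHom.mem_ker, ← htr, ← map_zero (algebraMap (ZMod 2) K),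
    (FaithfulSMul.algebraMap_injective (ZMod 2) K).eq_iff]
  rfl

section FieldCharTwo
variable {K : Type*} [Field K] [CharP K 2]

theorem coe_ker_artinSchreier : ((artinSchreier K).ker : Set K) = {0, 1} := by
  ext z
  simp [artinSchreier, sq_add_self_eq_zero_iff]

section Trace
variable [Fintype K] [Algebra (ZMod 2) K]

theorem range_artinSchreier_eq_ker_trace :
    (artinSchreier K).range = (Algebra.trace (ZMod 2) K).toAddMonoidHom.ker := by
  set tr := (Algebra.trace (ZMod 2) K).toAddMonoidHom
  have hle : (artinSchreier K).range ≤ tr.ker := by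
    rintro _ ⟨z, rfl⟩
    have hcard : 2 ^ Module.finrank (ZMod 2) K = Fintype.card K := by
      rw [Module.card_eq_pow_finrank (K := ZMod 2) (V := K), ZMod.card]
    rw [mem_ker_trace_zmod_two_iff]
    change ∑ i ∈ range _, (z ^ 2 + z) ^ 2 ^ i = 0
    rw [sum_range_sq_add_self_pow_two_pow, hcard, FiniteField.pow_card, CharTwo.add_self_eq_zero]
  have hker : Nat.card (artinSchreier K).ker = 2 := by
    rw [← SetLike.coe_sort_coe, coe_ker_artinSchreier, Nat.card_coe_set_eq,
      Set.ncard_pair zero_ne_one]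
  have hrange : Nat.card tr.range = 2 := by
    rw [AddMonoidHom.range_eq_top.mpr (Algebra.trace_surjective (ZMod 2) K),
      AddSubgroup.card_top, Nat.card_zmod]
  have htr_card := tr.ker.card_mul_index
  have has_card := (artinSchreier K).ker.card_mul_index
  rw [AddSubgroup.index_ker, hrange] at htr_card
  rw [AddSubgroup.index_ker, hker] at has_card
  exact AddSubgroup.eq_of_le_of_card_ge hle (by omega)

end Trace

theorem exists_sq_add_self_eq_of_sum_pow_two_pow_eq_zero [Fintype K] {m : ℕ}
    (hK : Fintype.card K = 2 ^ m) {c : K} (hc : ∑ i ∈ range m, c ^ 2 ^ i = 0) :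
    ∃ z, z ^ 2 + z = c := by
  let := ZMod.algebra K 2
  have hrank : Module.finrank (ZMod 2) K = m :=
    Nat.pow_right_injective le_rfl <| by
      change 2 ^ _ = 2 ^ m
      rw [← hK, Module.card_eq_pow_finrank (K := ZMod 2), ZMod.card]
  have hc' : c ∈ (Algebra.trace (ZMod 2) K).toAddMonoidHom.ker := by
    rwa [mem_ker_trace_zmod_two_iff, hrank]
  rw [← range_artinSchreier_eq_ker_trace] at hc'
  exact hc'

variable {z : K}

theorem inv_add_one_add_inv_inv_add_one (hz0 : z ≠ 0) (hz1 : z ≠ 1) :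
    (z⁻¹ + 1) + (z⁻¹ + 1)⁻¹ = (z ^ 2 + z)⁻¹ := by
  have hz1' : z + 1 ≠ 0 := mt CharTwo.add_eq_zero.mp hz1
  rw [inv_eq_one_div z, div_add_one hz0, add_comm 1 z, inv_div]
  field_simp
  linear_combination (z ^ 2 + z) * CharTwo.two_eq_zero (R := K)

theorem inv_inv_add_one (hz0 : z ≠ 0) (hz1 : z ≠ 1) : (z⁻¹ + 1)⁻¹ = (z + 1)⁻¹ + 1 := by
  have hz1' : z + 1 ≠ 0 := mt CharTwo.add_eq_zero.mp hz1
  rw [inv_eq_one_div z, div_add_one hz0, add_comm 1 z, inv_div]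
  field_simp
  linear_combination -CharTwo.two_eq_zero (R := K)

theorem inv_add_one_pow_two_pow_eq_self_iff (k : ℕ) :
    (z⁻¹ + 1) ^ 2 ^ k = z⁻¹ + 1 ↔ z ^ 2 ^ k = z := by
  rw [add_pow_char_pow, one_pow, inv_pow, add_left_inj, inv_inj]

theorem inv_add_one_pow_two_pow_eq_inv_iff (hz0 : z ≠ 0) (hz1 : z ≠ 1) (k : ℕ) :
    (z⁻¹ + 1) ^ 2 ^ k = (z⁻¹ + 1)⁻¹ ↔ z ^ 2 ^ k = z + 1 := by
  rw [add_pow_char_pow, one_pow, inv_pow, inv_inv_add_one hz0 hz1, add_left_inj, inv_inj]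

theorem setOf_exists_add_inv_eq {P Q : K → Prop}
    (hPQ : ∀ z, z ≠ 0 → z ≠ 1 → (P (z⁻¹ + 1) ↔ Q z)) :
    {a | ∃ x, P x ∧ x ≠ 0 ∧ x ≠ 1 ∧ x + x⁻¹ = a} =
      {a | ∃ z, Q z ∧ z ≠ 0 ∧ z ≠ 1 ∧ (z ^ 2 + z)⁻¹ = a} := by
  ext a
  constructor
  · rintro ⟨x, hP, hx0, hx1, rfl⟩
    have hx : (x + 1)⁻¹⁻¹ + 1 = x := by rw [inv_inv, CharTwo.add_cancel_right]
    have hz0 : (x + 1)⁻¹ ≠ 0 := inv_ne_zero (mt CharTwo.add_eq_zero.mp hx1)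
    have hz1 : (x + 1)⁻¹ ≠ 1 := fun h =>
      hx0 (by rw [← hx, h, inv_one, CharTwo.add_self_eq_zero])
    refine ⟨(x + 1)⁻¹, (hPQ _ hz0 hz1).1 (by rwa [hx]), hz0, hz1, ?_⟩
    rw [← inv_add_one_add_inv_inv_add_one hz0 hz1, hx]
  · rintro ⟨z, hQ, hz0, hz1, rfl⟩
    refine ⟨z⁻¹ + 1, (hPQ z hz0 hz1).2 hQ, ?_, ?_, inv_add_one_add_inv_inv_add_one hz0 hz1⟩
    · simpa [CharTwo.add_eq_zero] using hz1
    · simpa using hz0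

theorem setOf_exists_inv_sq_add_self_eq [Fintype K] {k : ℕ} (hK : Fintype.card K = 2 ^ (2 * k))
    {b : K} (hb : IsIdempotentElem b) :
    {a | ∃ z, z ^ 2 ^ k = z + b ∧ z ≠ 0 ∧ z ≠ 1 ∧ (z ^ 2 + z)⁻¹ = a} =
      {a | a ≠ 0 ∧ a ^ 2 ^ k = a ∧ ∑ i ∈ range k, a⁻¹ ^ 2 ^ i = b} := by
  ext a
  constructor
  · rintro ⟨z, hz, hz0, hz1, rfl⟩
    have hsq : z ^ 2 + z ≠ 0 := by simp [sq_add_self_eq_zero_iff, hz0, hz1]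
    refine ⟨inv_ne_zero hsq, ?_, ?_⟩
    · rw [inv_pow, add_pow_char_pow, ← pow_mul, mul_comm, pow_mul, hz, CharTwo.add_sq, sq b,
        hb.eq]
      congr 1
      linear_combination b * CharTwo.two_eq_zero (R := K)
    · rw [inv_inv, sum_range_sq_add_self_pow_two_pow, hz, add_right_comm, CharTwo.add_self_eq_zero,
        zero_add]
  · rintro ⟨ha0, haF, htr⟩
    obtain ⟨z, hz⟩ := exists_sq_add_self_eq_of_sum_pow_two_pow_eq_zero hK
      (sum_range_two_mul_pow_two_pow_eq_zero (by rw [inv_pow, haF]))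
    have hsq : z ^ 2 + z ≠ 0 := hz ▸ inv_ne_zero ha0
    obtain ⟨hz0, hz1⟩ : z ≠ 0 ∧ z ≠ 1 := by
      simpa [sq_add_self_eq_zero_iff, not_or] using hsq
    refine ⟨z, ?_, hz0, hz1, by rw [hz, inv_inv]⟩
    rw [← hz, sum_range_sq_add_self_pow_two_pow] at htr
    rw [add_comm]
    exact CharTwo.add_eq_iff_eq_add.mp htr

end FieldCharTwo

theorem stmt7_general (n : ℕ) (q : ℕ) (hq : q = 2 ^ n)
    (K : Type*) [Field K] [Fintype K] (hK : Fintype.card K = q ^ 4) :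
    {a : K | ∃ x : K, x ^ (q ^ 2 + 1) = 1 ∧ x ≠ 1 ∧ x + x⁻¹ = a} =
      {a : K | a ≠ 0 ∧ a ^ q ^ 2 = a ∧
        (∑ i ∈ Finset.range (2 * n), a⁻¹ ^ 2 ^ i) = 1} ∧
    {a : K | ∃ x : K, x ^ q ^ 2 = x ∧ x ≠ 0 ∧ x ≠ 1 ∧ x + x⁻¹ = a} =
      {a : K | a ≠ 0 ∧ a ^ q ^ 2 = a ∧
        (∑ i ∈ Finset.range (2 * n), a⁻¹ ^ 2 ^ i) = 0} := by
  subst hq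
  have hK' : Fintype.card K = 2 ^ (2 * (2 * n)) := by rw [hK, ← pow_mul]; ring_nf
  have : CharP K 2 := charP_of_card_eq_prime_pow hK'
  rw [← pow_mul, mul_comm]
  constructor
  · calc {a : K | ∃ x : K, x ^ (2 ^ (2 * n) + 1) = 1 ∧ x ≠ 1 ∧ x + x⁻¹ = a}
        = {a | ∃ x, x ^ 2 ^ (2 * n) = x⁻¹ ∧ x ≠ 0 ∧ x ≠ 1 ∧ x + x⁻¹ = a} := by
          simp only [pow_succ_eq_one_iff, and_assoc]
      _ = {a | ∃ z, z ^ 2 ^ (2 * n) = z + 1 ∧ z ≠ 0 ∧ z ≠ 1 ∧ (z ^ 2 + z)⁻¹ = a} :=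
          setOf_exists_add_inv_eq fun z hz0 hz1 => inv_add_one_pow_two_pow_eq_inv_iff hz0 hz1 _
      _ = _ := setOf_exists_inv_sq_add_self_eq hK' .one
  · rw [← setOf_exists_inv_sq_add_self_eq hK' .zero]
    simp_rw [add_zero]
    exact setOf_exists_add_inv_eq fun z _ _ => inv_add_one_pow_two_pow_eq_self_iff _

/-- With `Φ(x) = x + x⁻¹` on `𝔽_{q⁴}ˣ`:
`Φ(μ_{q²+1}\{1}) = {a ∈ 𝔽_{q²}ˣ : Tr_2^{q²}(1/a) = 1}` and
`Φ(𝔽_{q²}ˣ\{1}) = {a ∈ 𝔽_{q²}ˣ : Tr_2^{q²}(1/a) = 0}`. -/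
theorem stmt7 (n : ℕ) (hn : 0 < n) (q : ℕ) (hq : q = 2 ^ n)
    (K : Type*) [Field K] [Fintype K] (hK : Fintype.card K = q ^ 4) :
    {a : K | ∃ x : K, x ^ (q ^ 2 + 1) = 1 ∧ x ≠ 1 ∧ x + x⁻¹ = a} =
      {a : K | a ≠ 0 ∧ a ^ q ^ 2 = a ∧
        (∑ i ∈ Finset.range (2 * n), a⁻¹ ^ 2 ^ i) = 1} ∧
    {a : K | ∃ x : K, x ^ q ^ 2 = x ∧ x ≠ 0 ∧ x ≠ 1 ∧ x + x⁻¹ = a} =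
      {a : K | a ≠ 0 ∧ a ^ q ^ 2 = a ∧
        (∑ i ∈ Finset.range (2 * n), a⁻¹ ^ 2 ^ i) = 0} :=
  stmt7_general n q hq K hK
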